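/- Let T be a tree and M a submonoid of Emb(T). Then the limit set L(M) has either zero, one, two, or infinitely many elements; in particular it cannot be finite with three or more elements. -/

import Mathlib

open SimpleGraph

variable {V : Type*}

/-- `g` is a self-embedding of `G`: injective and adjacency-preserving. -/
def IsEmb (G : SimpleGraph V) (g : V → V) : Prop :=
  Function.Injective g ∧ ∀ u v : V, G.Adj u v → G.Adj (g u) (g v)

/-- A ray in `G`: a one-way infinite path. -/
structure GRay (G : SimpleGraph V) where
  f : ℕ → V
  inj : Function.Injective f
  adj : ∀ n, G.Adj (f n) (f (n + 1))

/-- Two rays are equivalent (lie in the same end): for every vertex `v` they have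
tails avoiding `v` lying in the same component of `G − v`. -/
def RayEquiv (G : SimpleGraph V) (R S : GRay G) : Prop :=
  ∀ v : V, ∃ m n : ℕ, (∀ i, m ≤ i → R.f i ≠ v) ∧ (∀ j, n ≤ j → S.f j ≠ v) ∧
    ∃ w : G.Walk (R.f m) (S.f n), v ∉ w.support

/-- `g` fixes the end represented by the ray `R`: the image ray is equivalent to `R`. -/
def FixesEnd (G : SimpleGraph V) (g : V → V) (R : GRay G) : Prop :=
  ∃ S : GRay G, (∀ n, S.f n = g (R.f n)) ∧ RayEquiv G S R

def FixesVertex (g : V → V) : Prop := ∃ v, g v = v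

/-- `g` fixes an edge setwise (possibly swapping its endpoints). -/
def FixesEdge (G : SimpleGraph V) (g : V → V) : Prop :=
  ∃ u v : V, G.Adj u v ∧ ((g u = u ∧ g v = v) ∨ (g u = v ∧ g v = u))

/-- `g` fixes setwise a non-empty finite subtree of `G`. -/
def FixesFiniteSubtree (G : SimpleGraph V) (g : V → V) : Prop :=
  ∃ S : Set V, S.Nonempty ∧ S.Finite ∧ (G.induce S).Connected ∧ g '' S = S

/-- `R` is a ray with `g(R) ⊆ R`; for non-elliptic `g` its end is the direction `g⁺`. -/
def DirectionRay (G : SimpleGraph V) (g : V → V) (R : GRay G) : Prop :=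
  ∀ n, ∃ m, g (R.f n) = R.f m

/-- `w` lies in the component of `G − x` containing the end of `R`. -/
def InComp (G : SimpleGraph V) (x : V) (R : GRay G) (w : V) : Prop :=
  ∃ m, (∀ i, m ≤ i → R.f i ≠ x) ∧ ∃ p : G.Walk w (R.f m), x ∉ p.support

/-- A sequence of vertices converges to the end represented by `R`. -/
def ConvergesTo (G : SimpleGraph V) (x : ℕ → V) (R : GRay G) : Prop :=
  ∀ v : V, ∃ N : ℕ, ∀ n, N ≤ n → InComp G v R (x n)

/-- `M` is a submonoid of `Emb(G)`. -/
def IsEmbMonoid (G : SimpleGraph V) (M : Set (V → V)) : Prop :=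
  (∀ g ∈ M, IsEmb G g) ∧ (id ∈ M) ∧ ∀ g ∈ M, ∀ h ∈ M, (g ∘ h) ∈ M

/-- The end of `R` is an accumulation point of the orbit of `v0` under `M`:
every basic neighbourhood of the end of `R` meets the orbit. -/
def InLimitSet (G : SimpleGraph V) (M : Set (V → V)) (v0 : V) (R : GRay G) : Prop :=
  ∀ x : V, ∃ g ∈ M, InComp G x R (g v0)

/-!
Let `A`, `B`, `C` be pairwise inequivalent limit rays and `F` a finite family of rays. Choose a
vertex `x = A.f j` so deep along `A` that the component of `T - x` containing the end of `A`
contains no end of `F` other than (possibly) that of `A`, and `g ∈ M` moving `v0` into that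
component. The images `g A`, `g B`, `g C` are again limit rays; by injectivity at most one of
their tails meets `x`, so two of them have ends in the component of `g v0`, and as `g` reflects
inequivalence of rays, one of these ends differs from that of `A`. This is a limit end outside
`F`, and iterating produces arbitrarily many pairwise distinct limit ends.
-/

open Filter

section Walks

variable {G : SimpleGraph V}

def ReachableAvoiding (G : SimpleGraph V) (x u v : V) : Prop :=
  ∃ w : G.Walk u v, x ∉ w.support

namespace ReachableAvoiding

variable {x u v w : V}

lemma refl (h : u ≠ x) : ReachableAvoiding G x u u :=
  ⟨Walk.nil, by simpa using h.symm⟩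

lemma symm : ReachableAvoiding G x u v → ReachableAvoiding G x v u := by
  rintro ⟨p, hp⟩
  exact ⟨p.reverse, by simpa using hp⟩

lemma trans : ReachableAvoiding G x u v → ReachableAvoiding G x v w →
    ReachableAvoiding G x u w := by
  rintro ⟨p, hp⟩ ⟨q, hq⟩
  exact ⟨p.append q, by simp [Walk.mem_support_append_iff, hp, hq]⟩

lemma of_mem_support [DecidableEq V] {p : G.Walk u v} (hx : x ∉ p.support)
    (hw : w ∈ p.support) : ReachableAvoiding G x w v :=
  ⟨p.dropUntil w hw, fun h => hx (p.support_dropUntil_subset_support hw h)⟩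

end ReachableAvoiding

def IsEmb.toHom {g : V → V} (hg : IsEmb G g) : G →g G := ⟨g, hg.2 _ _⟩

lemma IsEmb.notMem_support_map {g : V → V} (hg : IsEmb G g) {x u v : V} {p : G.Walk u v}
    (hx : x ∉ p.support) : g x ∉ (p.map hg.toHom).support := by
  rw [Walk.support_map]
  exact fun h => hx ((List.mem_map_of_injective (f := hg.toHom) hg.1).1 h)

lemma ReachableAvoiding.map {g : V → V} (hg : IsEmb G g) {x u v : V}
    (h : ReachableAvoiding G x u v) : ReachableAvoiding G (g x) (g u) (g v) :=
  let ⟨p, hp⟩ := h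
  ⟨p.map hg.toHom, hg.notMem_support_map hp⟩

lemma SimpleGraph.IsTree.support_subset_of_isPath (hT : G.IsTree) {u v : V} {p : G.Walk u v}
    (hp : p.IsPath) (q : G.Walk u v) : p.support ⊆ q.support := by
  classical
  obtain ⟨r, -, hr⟩ := hT.existsUnique_path u v
  rw [hr p hp, ← hr q.bypass q.bypass_isPath]
  exact q.support_bypass_subset_support

lemma ReachableAvoiding.of_map (hT : G.IsTree) {g : V → V} (hg : IsEmb G g) {x u v : V}
    (h : ReachableAvoiding G (g x) (g u) (g v)) : ReachableAvoiding G x u v := by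
  classical
  obtain ⟨q, hq⟩ := h
  obtain ⟨p⟩ := hT.connected.preconnected u v
  have hpath : (p.bypass.map hg.toHom).IsPath := p.bypass_isPath.map hg.1
  refine ⟨p.bypass, fun hx => hq (hT.support_subset_of_isPath hpath q ?_)⟩
  rw [Walk.support_map]
  exact List.mem_map_of_mem hx

end Walks

namespace GRay

variable {G : SimpleGraph V} (R : GRay G)

def walk (a : ℕ) : (k : ℕ) → G.Walk (R.f a) (R.f (a + k))
  | 0 => Walk.nil
  | k + 1 => (walk a k).concat (R.adj (a + k))

lemma support_walk (a k : ℕ) : (R.walk a k).support = (List.range' a (k + 1)).map R.f := by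
  induction k with
  | zero => simp [walk]
  | succ k ih =>
    rw [walk, Walk.support_concat, ih, List.range'_concat (s := a) (n := k + 1)]
    simp

lemma walk_isPath (a k : ℕ) : (R.walk a k).IsPath :=
  Walk.IsPath.mk' (R.support_walk a k ▸ (List.nodup_range' ..).map R.inj)

lemma mem_support_walk {a k : ℕ} {y : V} :
    y ∈ (R.walk a k).support ↔ ∃ t, a ≤ t ∧ t ≤ a + k ∧ R.f t = y := by
  simp only [support_walk, List.mem_map, List.mem_range'_1]
  constructor
  · rintro ⟨t, ht, rfl⟩
    exact ⟨t, ht.1, by omega, rfl⟩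
  · rintro ⟨t, h₁, h₂, rfl⟩
    exact ⟨t, ⟨h₁, by omega⟩, rfl⟩

lemma not_reachableAvoiding (hT : G.IsTree) {a t b : ℕ} (hat : a ≤ t) (htb : t ≤ b) :
    ¬ ReachableAvoiding G (R.f t) (R.f a) (R.f b) := by
  rintro ⟨q, hq⟩
  obtain ⟨k, rfl⟩ := Nat.exists_eq_add_of_le (hat.trans htb)
  exact hq (hT.support_subset_of_isPath (R.walk_isPath a k) q
    (R.mem_support_walk.2 ⟨t, hat, htb, rfl⟩))

lemma reachableAvoiding_of_le {x : V} {N a b : ℕ} (hx : ∀ i, N ≤ i → R.f i ≠ x)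
    (ha : N ≤ a) (hb : N ≤ b) : ReachableAvoiding G x (R.f a) (R.f b) := by
  wlog hab : a ≤ b generalizing a b
  · exact (this hb ha (le_of_not_ge hab)).symm
  obtain ⟨k, rfl⟩ := Nat.exists_eq_add_of_le hab
  refine ⟨R.walk a k, fun h => ?_⟩
  obtain ⟨t, hat, -, ht⟩ := R.mem_support_walk.1 h
  exact hx t (ha.trans hat) ht

lemma reachableAvoiding {x : V} {a b : ℕ} (ha : ∀ i, a ≤ i → R.f i ≠ x)
    (hb : ∀ i, b ≤ i → R.f i ≠ x) : ReachableAvoiding G x (R.f a) (R.f b) := by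
  rcases le_total a b with hab | hab
  · exact R.reachableAvoiding_of_le ha le_rfl hab
  · exact R.reachableAvoiding_of_le hb hab le_rfl

lemma eventually_notMem {s : Set V} (hs : s.Finite) : ∀ᶠ i in atTop, R.f i ∉ s :=
  Nat.cofinite_eq_atTop ▸ R.inj.tendsto_cofinite.eventually_mem hs.compl_mem_cofinite

lemma exists_forall_ne (x : V) : ∃ N, ∀ i, N ≤ i → R.f i ≠ x :=
  eventually_atTop.1 (R.eventually_notMem (Set.finite_singleton x))

lemma exists_notMem_list (l : List V) (a : ℕ) : ∃ j, a ≤ j ∧ j ≤ a + l.length ∧ R.f j ∉ l := by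
  classical
  by_contra! h
  have hmaps : Set.MapsTo R.f (Finset.Icc a (a + l.length)) l.toFinset := fun j hj => by
    rw [Finset.coe_Icc, Set.mem_Icc] at hj
    exact List.mem_toFinset.2 (h j hj.1 hj.2)
  have hcard := Finset.card_le_card_of_injOn R.f hmaps R.inj.injOn
  rw [Nat.card_Icc] at hcard
  have := l.toFinset_card_le
  omega

def map {g : V → V} (hg : IsEmb G g) : GRay G :=
  ⟨g ∘ R.f, hg.1.comp R.inj, fun n => hg.2 _ _ (R.adj n)⟩

end GRay

section Ends

variable {G : SimpleGraph V}

namespace RayEquiv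

variable {R S T : GRay G}

lemma symm (h : RayEquiv G R S) : RayEquiv G S R := fun v =>
  let ⟨m, n, hm, hn, hc⟩ := h v
  ⟨n, m, hn, hm, ReachableAvoiding.symm hc⟩

lemma trans (h₁ : RayEquiv G R S) (h₂ : RayEquiv G S T) : RayEquiv G R T := fun v =>
  let ⟨m, _, hm, hn, hc₁⟩ := h₁ v
  let ⟨_, t, hn', ht, hc₂⟩ := h₂ v
  ⟨m, t, hm, ht, (ReachableAvoiding.trans hc₁ (S.reachableAvoiding hn hn')).trans hc₂⟩

lemma of_frequently_meet (h : ∀ N, ∃ i j, N ≤ i ∧ N ≤ j ∧ R.f i = S.f j) : RayEquiv G R S := by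
  intro v
  obtain ⟨M, hM⟩ := R.exists_forall_ne v
  obtain ⟨N, hN⟩ := S.exists_forall_ne v
  obtain ⟨i, j, hi, hj, hij⟩ := h (max M N)
  exact ⟨i, j, fun i' hi' => hM i' (by omega), fun j' hj' => hN j' (by omega),
    hij ▸ ReachableAvoiding.refl (hM i (by omega))⟩

lemma of_map (hT : G.IsTree) {g : V → V} (hg : IsEmb G g)
    (h : RayEquiv G (R.map hg) (S.map hg)) : RayEquiv G R S := fun v =>
  let ⟨m, n, hm, hn, hc⟩ := h (g v)
  ⟨m, n, fun i hi hiv => hm i hi (congrArg g hiv), fun j hj hjv => hn j hj (congrArg g hjv),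
    ReachableAvoiding.of_map hT hg hc⟩

end RayEquiv

lemma exists_disjoint_tails {R S : GRay G} (h : ¬ RayEquiv G R S) :
    ∃ N, ∀ i j, N ≤ i → N ≤ j → R.f i ≠ S.f j := by
  by_contra! hc
  exact h (RayEquiv.of_frequently_meet hc)

namespace InComp

variable {x w w' : V} {R : GRay G}

lemma of_reachableAvoiding (h : InComp G x R w) (hc : ReachableAvoiding G x w' w) :
    InComp G x R w' :=
  let ⟨m, hm, hw⟩ := h
  ⟨m, hm, hc.trans hw⟩

lemma map {g : V → V} (hg : IsEmb G g) (h : InComp G x R w) :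
    InComp G (g x) (R.map hg) (g w) :=
  let ⟨m, hm, hw⟩ := h
  ⟨m, fun i hi hix => hm i hi (hg.1 hix), ReachableAvoiding.map hg hw⟩

lemma mono (hT : G.IsTree) {j n : ℕ} (hjn : j ≤ n) (h : InComp G (R.f n) R w) :
    InComp G (R.f j) R w := by
  classical
  obtain ⟨m, hm, p, hp⟩ := h
  have hnm : n < m := lt_of_not_ge fun hmn => hm n hmn rfl
  refine ⟨m, fun i hi hij => by have := R.inj hij; omega, p, fun hj => ?_⟩
  exact R.not_reachableAvoiding hT hjn hnm.le (.of_mem_support hp hj)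

end InComp

def EndIn (G : SimpleGraph V) (x : V) (R S : GRay G) : Prop :=
  ∃ N, (∀ i, N ≤ i → S.f i ≠ x) ∧ InComp G x R (S.f N)

lemma EndIn.congr {x : V} {R S S' : GRay G} (h : EndIn G x R S) (he : RayEquiv G S S') :
    EndIn G x R S' :=
  let ⟨_, hN, hin⟩ := h
  let ⟨_, n, hm, hn, hc⟩ := he x
  ⟨n, hn, (hin.of_reachableAvoiding (S.reachableAvoiding hm hN)).of_reachableAvoiding
    (ReachableAvoiding.symm hc)⟩

/-- Let `v` separate the tails of `R` and `S`. If the end of `S` lay beyond `R.f j`, then `v`,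
and for large `j` also `R.f 0`, would be joined to the tail of `R` off `R.f j`. -/
lemma eventually_not_endIn (hT : G.IsTree) {R S : GRay G} (h : ¬ RayEquiv G R S) :
    ∀ᶠ j in atTop, ¬ EndIn G (R.f j) R S := by
  classical
  simp only [RayEquiv, not_forall] at h
  obtain ⟨v, hv⟩ := h
  push Not at hv
  obtain ⟨M, hM⟩ := R.exists_forall_ne v
  obtain ⟨N, hN⟩ := S.exists_forall_ne v
  obtain ⟨p⟩ := hT.connected.preconnected (R.f 0) v
  filter_upwards [R.eventually_notMem p.support.finite_toSet] with j hj
  rintro ⟨n, hn, m, hm, hc⟩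
  have hjm : j < m := lt_of_not_ge fun hmj => hm j hmj rfl
  obtain ⟨q, hq⟩ := ((S.reachableAvoiding_of_le hn (le_max_left n N) le_rfl).trans hc).trans
    (R.reachableAvoiding_of_le hm le_rfl (le_max_left m M))
  have hvq : v ∈ q.support := by
    simpa using hv (max m M) (max n N) (fun i hi => hM i (by omega))
      (fun i hi => hN i (by omega)) q.reverse
  exact R.not_reachableAvoiding hT (Nat.zero_le j) (hjm.le.trans (le_max_left m M))
    (ReachableAvoiding.trans ⟨p, hj⟩ (.of_mem_support hq hvq))

end Ends

section LimitSet

variable {G : SimpleGraph V} {M : Set (V → V)} {v0 : V}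

lemma InLimitSet.map (hT : G.IsTree) (hM : IsEmbMonoid G M) {g : V → V} (hgM : g ∈ M)
    (hg : IsEmb G g) {R : GRay G} (hR : InLimitSet G M v0 R) :
    InLimitSet G M v0 (R.map hg) := by
  intro x
  by_cases hx : x ∈ Set.range g
  · obtain ⟨u, rfl⟩ := hx
    obtain ⟨h, hhM, hin⟩ := hR u
    exact ⟨g ∘ h, hM.2.2 g hgM h hhM, hin.map hg⟩
  · obtain ⟨p⟩ := hT.connected.preconnected v0 (R.f 0)
    refine ⟨g, hgM, 0, fun i _ hix => hx ⟨R.f i, hix⟩, p.map hg.toHom, fun hmem => ?_⟩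
    change x ∈ (p.map hg.toHom).support at hmem
    rw [Walk.support_map] at hmem
    obtain ⟨y, -, hy⟩ := List.mem_map.1 hmem
    exact hx ⟨y, hy⟩

lemma endIn_map {g : V → V} (hg : IsEmb G g) {x : V} {R A : GRay G}
    (hbase : InComp G x R (g v0)) {N : ℕ} (p : G.Walk v0 (A.f N))
    (hp : x ∉ (p.map hg.toHom).support) (hA : ∀ t, N ≤ t → g (A.f t) ≠ x) :
    EndIn G x R (A.map hg) :=
  ⟨N, hA, hbase.of_reachableAvoiding (ReachableAvoiding.symm ⟨p.map hg.toHom, hp⟩)⟩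

lemma exists_inLimitSet_endIn_of_two (hT : G.IsTree) (hM : IsEmbMonoid G M) {g : V → V}
    (hgM : g ∈ M) (hg : IsEmb G g) {x : V} {R A B : GRay G} (hbase : InComp G x R (g v0))
    (hA : InLimitSet G M v0 A) (hB : InLimitSet G M v0 B) (hAB : ¬ RayEquiv G A B) {N : ℕ}
    (pA : G.Walk v0 (A.f N)) (pB : G.Walk v0 (B.f N))
    (hpA : x ∉ (pA.map hg.toHom).support) (hpB : x ∉ (pB.map hg.toHom).support)
    (hAx : ∀ t, N ≤ t → g (A.f t) ≠ x) (hBx : ∀ t, N ≤ t → g (B.f t) ≠ x) :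
    ∃ S, InLimitSet G M v0 S ∧ EndIn G x R S ∧ ¬ RayEquiv G S R := by
  by_cases hAR : RayEquiv G (A.map hg) R
  · refine ⟨B.map hg, hB.map hT hM hgM hg, endIn_map hg hbase pB hpB hBx, fun hBR => ?_⟩
    exact hAB (.of_map hT hg (hAR.trans hBR.symm))
  · exact ⟨A.map hg, hA.map hT hM hgM hg, endIn_map hg hbase pA hpA hAx, hAR⟩

/-- As `g` is injective, at most one of three rays with pairwise disjoint tails passes through
`x` after mapping by `g`. -/
lemma exists_inLimitSet_endIn_of_three (hT : G.IsTree) (hM : IsEmbMonoid G M) {g : V → V}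
    (hgM : g ∈ M) (hg : IsEmb G g) {x : V} {R A B C : GRay G} (hbase : InComp G x R (g v0))
    (hA : InLimitSet G M v0 A) (hB : InLimitSet G M v0 B) (hC : InLimitSet G M v0 C)
    (hAB : ¬ RayEquiv G A B) (hAC : ¬ RayEquiv G A C) (hBC : ¬ RayEquiv G B C) {N : ℕ}
    (hdAB : ∀ p q, N ≤ p → N ≤ q → A.f p ≠ B.f q) (hdAC : ∀ p q, N ≤ p → N ≤ q → A.f p ≠ C.f q)
    (hdBC : ∀ p q, N ≤ p → N ≤ q → B.f p ≠ C.f q)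
    (pA : G.Walk v0 (A.f N)) (pB : G.Walk v0 (B.f N)) (pC : G.Walk v0 (C.f N))
    (hpA : x ∉ (pA.map hg.toHom).support) (hpB : x ∉ (pB.map hg.toHom).support)
    (hpC : x ∉ (pC.map hg.toHom).support) :
    ∃ S, InLimitSet G M v0 S ∧ EndIn G x R S ∧ ¬ RayEquiv G S R := by
  have avoid : ∀ {P Q : GRay G}, (∀ p q, N ≤ p → N ≤ q → P.f p ≠ Q.f q) →
      ¬ (∀ t, N ≤ t → g (P.f t) ≠ x) → ∀ t, N ≤ t → g (Q.f t) ≠ x := by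
    intro P Q hd hP t ht hQt
    push Not at hP
    obtain ⟨s, hs, hPs⟩ := hP
    exact hd s t hs ht (hg.1 (hPs.trans hQt.symm))
  by_cases hAx : ∀ t, N ≤ t → g (A.f t) ≠ x
  · by_cases hBx : ∀ t, N ≤ t → g (B.f t) ≠ x
    · exact exists_inLimitSet_endIn_of_two hT hM hgM hg hbase hA hB hAB pA pB hpA hpB hAx hBx
    · exact exists_inLimitSet_endIn_of_two hT hM hgM hg hbase hA hC hAC pA pC hpA hpC hAx
        (avoid hdBC hBx)
  · exact exists_inLimitSet_endIn_of_two hT hM hgM hg hbase hB hC hBC pB pC hpB hpC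
      (avoid hdAB hAx) (avoid hdAC hAx)

/-- The cut vertex `A.f j` is chosen, by pigeonhole, off the images under `g` of three fixed
walks from `v0` to the rays. -/
lemma exists_inLimitSet_endIn (hT : G.IsTree) (hM : IsEmbMonoid G M) {A B C : GRay G}
    (hA : InLimitSet G M v0 A) (hB : InLimitSet G M v0 B) (hC : InLimitSet G M v0 C)
    (hAB : ¬ RayEquiv G A B) (hAC : ¬ RayEquiv G A C) (hBC : ¬ RayEquiv G B C) (n : ℕ) :
    ∃ j, n ≤ j ∧ ∃ S, InLimitSet G M v0 S ∧ EndIn G (A.f j) A S ∧ ¬ RayEquiv G S A := by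
  obtain ⟨N₁, hN₁⟩ := exists_disjoint_tails hAB
  obtain ⟨N₂, hN₂⟩ := exists_disjoint_tails hAC
  obtain ⟨N₃, hN₃⟩ := exists_disjoint_tails hBC
  set N := max (max N₁ N₂) N₃
  obtain ⟨pA⟩ := hT.connected.preconnected v0 (A.f N)
  obtain ⟨pB⟩ := hT.connected.preconnected v0 (B.f N)
  obtain ⟨pC⟩ := hT.connected.preconnected v0 (C.f N)
  obtain ⟨g, hgM, hin⟩ :=
    hA (A.f (n + (pA.support.length + pB.support.length + pC.support.length)))
  have hg := hM.1 g hgM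
  obtain ⟨j, hnj, hjL, hj⟩ := A.exists_notMem_list
    ((pA.map hg.toHom).support ++ (pB.map hg.toHom).support ++ (pC.map hg.toHom).support) n
  simp only [List.length_append, Walk.support_map, List.length_map] at hjL
  simp only [List.mem_append, not_or] at hj
  refine ⟨j, hnj, exists_inLimitSet_endIn_of_three hT hM hgM hg (hin.mono hT hjL) hA hB hC
    hAB hAC hBC (fun p q hp hq => hN₁ p q (by omega) (by omega))
    (fun p q hp hq => hN₂ p q (by omega) (by omega))
    (fun p q hp hq => hN₃ p q (by omega) (by omega)) pA pB pC hj.1.1 hj.1.2 hj.2⟩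

lemma exists_inLimitSet_forall_not_rayEquiv (hT : G.IsTree) (hM : IsEmbMonoid G M)
    {A B C : GRay G} (hA : InLimitSet G M v0 A) (hB : InLimitSet G M v0 B)
    (hC : InLimitSet G M v0 C) (hAB : ¬ RayEquiv G A B) (hAC : ¬ RayEquiv G A C)
    (hBC : ¬ RayEquiv G B C) {ι : Type*} [Finite ι] (F : ι → GRay G) :
    ∃ S, InLimitSet G M v0 S ∧ ∀ i, ¬ RayEquiv G S (F i) := by
  have hsep : ∀ᶠ j in atTop, ∀ i, ¬ RayEquiv G A (F i) → ¬ EndIn G (A.f j) A (F i) :=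
    eventually_all.2 fun i => eventually_imp_distrib_left.2 fun h =>
      eventually_not_endIn hT h
  obtain ⟨n, hn⟩ := eventually_atTop.1 hsep
  obtain ⟨j, hnj, S, hS, hSA, hSA'⟩ := exists_inLimitSet_endIn hT hM hA hB hC hAB hAC hBC n
  refine ⟨S, hS, fun i hSi => ?_⟩
  by_cases hAi : RayEquiv G A (F i)
  · exact hSA' (hSi.trans hAi.symm)
  · exact hn j hnj i hAi (hSA.congr hSi)

end LimitSet

lemma Fin.pairwise_cons {α : Type*} {r : α → α → Prop} (hr : ∀ a b, r a b → r b a) {n : ℕ}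
    {F : Fin n → α} {a : α} (hF : Pairwise fun i j => r (F i) (F j)) (ha : ∀ i, r a (F i)) :
    Pairwise fun i j =>
      r (Fin.cons (α := fun _ => α) a F i) (Fin.cons (α := fun _ => α) a F j) := by
  intro i j hij
  cases i using Fin.cases <;> cases j using Fin.cases
  · exact absurd rfl hij
  · exact ha _
  · exact hr _ _ (ha _)
  · exact hF fun h => hij (congrArg Fin.succ h)

theorem stmt12 (G : SimpleGraph V) (hT : G.IsTree) (M : Set (V → V))
    (hM : IsEmbMonoid G M) (v0 : V)
    (h3 : ∃ R1 R2 R3 : GRay G, InLimitSet G M v0 R1 ∧ InLimitSet G M v0 R2 ∧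
      InLimitSet G M v0 R3 ∧ ¬ RayEquiv G R1 R2 ∧ ¬ RayEquiv G R1 R3 ∧ ¬ RayEquiv G R2 R3) :
    ∀ k : ℕ, ∃ F : Fin k → GRay G, (∀ i, InLimitSet G M v0 (F i)) ∧
      ∀ i j, i ≠ j → ¬ RayEquiv G (F i) (F j) := by
  obtain ⟨R1, R2, R3, hL1, hL2, hL3, h12, h13, h23⟩ := h3
  intro k
  induction k with
  | zero => exact ⟨Fin.elim0, fun i => i.elim0, fun i => i.elim0⟩
  | succ k ih =>
    obtain ⟨F, hF, hFne⟩ := ih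
    obtain ⟨S, hS, hSF⟩ :=
      exists_inLimitSet_forall_not_rayEquiv hT hM hL1 hL2 hL3 h12 h13 h23 F
    exact ⟨Fin.cons S F, Fin.cases hS hF,
      Fin.pairwise_cons (r := fun R S => ¬ RayEquiv G R S) (fun _ _ h h' => h h'.symm)
        hFne hSF⟩
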